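/- Let A, B be integers and p an odd prime such that B is a quadratic residue mod p, with b^2 ≡ B (mod p). Let u_n(A,B) be the Lucas sequence with u_0=0, u_1=1, u_{n+1}=A u_n - B u_{n-1}. If A^2 - 4B is a quadratic residue mod p then u_{(p-1)/2}(A,B) ≡ 0 (mod p), and if A^2 - 4B is a quadratic nonresidue mod p then b * u_{(p-1)/2}(A,B) ≡ (A-2b | p) (mod p), where (·|p) is the Legendre symbol. -/

import Mathlib

/-!
Work in a field of characteristic `p` containing the roots `α, β` of `X² - A X + B`, so that
`(α - β) u_n = αⁿ - βⁿ`, and put `m = (p - 1) / 2`. By Euler's criterion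
`(α - β)^p = (D | p) (α - β)` with `D = A² - 4B`, so the Frobenius map fixes `α` and `β` when `D` is
a residue and swaps them otherwise. In the first case `α^m` and `β^m` are square roots of `1` with
product `(b²)^m = 1`, hence equal, and `u_m = 0`. In the second case `(α - b)² = (A - 2b) α`;
raising this to the power `m` and multiplying by `α - b` gives
`(A - 2b)^m α^m (α - b) = (α - b)^p = β - b`, whence `(A - 2b | p) α^(m+1) = -b`. Together with the
same identity for `β` this gives `b (α^m - β^m) = (A - 2b | p) (α - β)`.
-/

/-- The Lucas sequence u_n(A, B). -/
def lucasU (A B : ℤ) : ℕ → ℤ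
  | 0 => 0
  | 1 => 1
  | n + 2 => A * lucasU A B (n + 1) - B * lucasU A B n

theorem sub_mul_lucasU {R : Type*} [CommRing R] {A B : ℤ} {α β : R}
    (hsum : α + β = A) (hprod : α * β = B) (n : ℕ) :
    (α - β) * lucasU A B n = α ^ n - β ^ n := by
  induction n using lucasU.induct with
  | case1 => simp [lucasU]
  | case2 => simp [lucasU]
  | case3 n ih₁ ih₀ =>
    rw [lucasU, Nat.succ_eq_add_one, Int.cast_sub, Int.cast_mul, Int.cast_mul, ← hsum, ← hprod]
    linear_combination (α + β) * ih₁ - α * β * ih₀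

theorem exists_add_eq_and_mul_eq {K : Type*} [Field K] [IsAlgClosed K] (a b : K) :
    ∃ α β : K, α + β = a ∧ α * β = b := by
  open Polynomial in
  obtain ⟨α, hα⟩ := IsAlgClosed.exists_root (C 1 * X ^ 2 + C (-a) * X + C b)
    (by rw [degree_quadratic one_ne_zero]; decide)
  refine ⟨α, a - α, by ring, ?_⟩
  simp only [IsRoot, eval_add, eval_mul, eval_pow, eval_C, eval_X] at hα
  linear_combination -hα

theorem pow_div_two_sq_eq_one {K : Type*} [Field K] {p : ℕ} (hp : Odd p) {x : K}
    (hx : x ^ p = x) (hx0 : x ≠ 0) : (x ^ (p / 2)) ^ 2 = 1 := by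
  refine mul_right_cancel₀ hx0 ?_
  rw [← pow_mul, ← pow_succ, mul_comm, Nat.two_mul_div_two_add_one_of_odd hp, hx, one_mul]

theorem pow_div_two_mul_pow_div_two_eq_one {K : Type*} [Field K] {p : ℕ} (hp : Odd p)
    {α β x : K} (hx : x ^ p = x) (hx0 : x ≠ 0) (hαβ : α * β = x ^ 2) :
    α ^ (p / 2) * β ^ (p / 2) = 1 := by
  rw [← mul_pow, hαβ, ← pow_mul, mul_comm, pow_mul, pow_div_two_sq_eq_one hp hx hx0]

theorem pow_div_two_eq_of_pow_eq_self {K : Type*} [Field K] {p : ℕ} (hp : Odd p) {α β x : K}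
    (hα : α ^ p = α) (hx : x ^ p = x) (hx0 : x ≠ 0) (hαβ : α * β = x ^ 2) :
    α ^ (p / 2) = β ^ (p / 2) := by
  have hα0 : α ≠ 0 := left_ne_zero_of_mul (hαβ ▸ pow_ne_zero 2 hx0)
  have hαβm := pow_div_two_mul_pow_div_two_eq_one hp hx hx0 hαβ
  linear_combination β ^ (p / 2) * pow_div_two_sq_eq_one hp hα hα0 - α ^ (p / 2) * hαβm

section CharP

variable {K : Type*} [Field K] {p : ℕ} [Fact p.Prime] [CharP K p]

theorem intCast_pow_char (a : ℤ) : (a : K) ^ p = a := by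
  simpa only [map_pow, map_intCast] using
    congrArg (ZMod.castHom (dvd_refl p) K) (ZMod.pow_card (a : ZMod p))

theorem intCast_pow_div_two (a : ℤ) : (a : K) ^ (p / 2) = legendreSym p a := by
  simpa using congrArg (ZMod.castHom (dvd_refl p) K) (legendreSym.eq_pow p a).symm

theorem pow_char_eq_legendreSym_mul (hp : p ≠ 2) {a : ℤ} {d : K} (hd : d ^ 2 = a) :
    d ^ p = legendreSym p a * d := by
  have hodd : Odd p := (Fact.out : p.Prime).odd_of_ne_two hp
  rw [← intCast_pow_div_two, ← hd, ← pow_mul, ← pow_succ, Nat.two_mul_div_two_add_one_of_odd hodd]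

theorem pow_char_eq_self_of_sub_pow_char (hp : p ≠ 2) {α β : K} (hsum : (α + β) ^ p = α + β)
    (hsub : (α - β) ^ p = α - β) : α ^ p = α := by
  rw [add_pow_char] at hsum
  rw [sub_pow_char] at hsub
  have h2 : (2 : K) ≠ 0 := Ring.two_ne_zero (by rwa [ringChar.eq K p])
  exact mul_left_cancel₀ h2 (by linear_combination hsum + hsub)

theorem pow_char_eq_swap_of_sub_pow_char (hp : p ≠ 2) {α β : K} (hsum : (α + β) ^ p = α + β)
    (hsub : (α - β) ^ p = -(α - β)) : α ^ p = β ∧ β ^ p = α := by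
  rw [add_pow_char] at hsum
  rw [sub_pow_char] at hsub
  have h2 : (2 : K) ≠ 0 := Ring.two_ne_zero (by rwa [ringChar.eq K p])
  constructor
  · exact mul_left_cancel₀ h2 (by linear_combination hsum + hsub)
  · exact mul_left_cancel₀ h2 (by linear_combination hsum - hsub)

theorem pow_div_two_mul_pow_succ (hp : p ≠ 2) {α x : K} (hx : x ^ p = x)
    (hαx : α * α ^ p = x ^ 2) (hα : α ^ p ≠ α) :
    (α + α ^ p - 2 * x) ^ (p / 2) * α ^ (p / 2 + 1) = -x := by
  have hodd : Odd p := (Fact.out : p.Prime).odd_of_ne_two hp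
  have hne : α - x ≠ 0 := sub_ne_zero.mpr fun h => hα (by rw [h, hx])
  have hsq : (α - x) ^ 2 = (α + α ^ p - 2 * x) * α := by linear_combination -hαx
  have hfrob : (α - x) ^ p = ((α - x) ^ 2) ^ (p / 2) * (α - x) := by
    rw [← pow_mul, ← pow_succ, Nat.two_mul_div_two_add_one_of_odd hodd]
  rw [sub_pow_char, hx, hsq, mul_pow] at hfrob
  exact mul_right_cancel₀ hne (by linear_combination -α * hfrob + hαx)

theorem mul_pow_div_two_sub_pow_div_two (hp : p ≠ 2) {α β x : K} (hα : α ^ p = β) (hβ : β ^ p = α)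
    (hx : x ^ p = x) (hx0 : x ≠ 0) (hαβ : α * β = x ^ 2) (hne : α ≠ β) :
    x * (α ^ (p / 2) - β ^ (p / 2)) = (α + β - 2 * x) ^ (p / 2) * (α - β) := by
  have kα := pow_div_two_mul_pow_succ hp hx (α := α) (by rwa [hα]) (by rw [hα]; exact hne.symm)
  have kβ := pow_div_two_mul_pow_succ hp hx (α := β) (by rwa [hβ, mul_comm])
    (by rw [hβ]; exact hne)
  rw [hα] at kα
  rw [hβ, add_comm β] at kβ
  set c := (α + β - 2 * x) ^ (p / 2)
  have hα' : c * α ^ (p / 2) * x = -β :=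
    mul_left_cancel₀ hx0 (by linear_combination β * kα - c * α ^ (p / 2) * hαβ)
  have hβ' : c * β ^ (p / 2) * x = -α :=
    mul_left_cancel₀ hx0 (by linear_combination α * kβ - c * β ^ (p / 2) * hαβ)
  have hαβm :=
    pow_div_two_mul_pow_div_two_eq_one ((Fact.out : p.Prime).odd_of_ne_two hp) hx hx0 hαβ
  have hc2 : c ^ 2 = 1 := by
    refine mul_left_cancel₀ (pow_ne_zero 2 hx0) ?_
    linear_combination c * β ^ (p / 2) * x * hα' - β * hβ' - c ^ 2 * x ^ 2 * hαβm + hαβ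
  linear_combination c * (hα' - hβ') - x * (α ^ (p / 2) - β ^ (p / 2)) * hc2

end CharP

theorem lucasU_half_p_sub_one (A B b : ℤ) (p : ℕ) [Fact p.Prime] (hp : p ≠ 2)
    (hb : ¬ (p : ℤ) ∣ b) (hB : b ^ 2 ≡ B [ZMOD p]) (hD : ¬ (p : ℤ) ∣ (A ^ 2 - 4 * B)) :
    (legendreSym p (A ^ 2 - 4 * B) = 1 →
      ((lucasU A B ((p - 1) / 2) : ZMod p) = 0)) ∧
    (legendreSym p (A ^ 2 - 4 * B) = -1 →
      (((b * lucasU A B ((p - 1) / 2) : ℤ) : ZMod p) =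
        ((legendreSym p (A - 2 * b) : ℤ) : ZMod p))) := by
  have hodd : Odd p := (Fact.out : p.Prime).odd_of_ne_two hp
  have hm : (p - 1) / 2 = p / 2 := by obtain ⟨k, rfl⟩ := hodd; omega
  rw [hm]
  let K := AlgebraicClosure (ZMod p)
  have hinj : Function.Injective (ZMod.castHom (dvd_refl p) K) := RingHom.injective _
  obtain ⟨α, β, hsum, hprod⟩ := exists_add_eq_and_mul_eq (A : K) (B : K)
  have hx : (b : K) ^ 2 = B := by exact_mod_cast (CharP.intCast_eq_intCast K p).mpr hB
  have hx0 : (b : K) ≠ 0 := by rwa [Ne, CharP.intCast_eq_zero_iff K p]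
  have hαβ : α * β = (b : K) ^ 2 := hprod.trans hx.symm
  have hdisc : (α - β) ^ 2 = ((A ^ 2 - 4 * B : ℤ) : K) := by
    push_cast
    linear_combination (α + β + A) * hsum - 4 * hprod
  have hne : α ≠ β := fun h => hD <| (CharP.intCast_eq_zero_iff K p _).mp <| by
    rw [← hdisc, h, sub_self, zero_pow two_ne_zero]
  have hfrob := pow_char_eq_legendreSym_mul hp hdisc
  have hsumfrob : (α + β) ^ p = α + β := by rw [hsum, intCast_pow_char]
  have hbinet := sub_mul_lucasU hsum hprod (p / 2)
  constructor
  · intro hε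
    rw [hε, Int.cast_one, one_mul] at hfrob
    have hαm := pow_div_two_eq_of_pow_eq_self hodd
      (pow_char_eq_self_of_sub_pow_char hp hsumfrob hfrob) (intCast_pow_char b) hx0 hαβ
    rw [hαm, sub_self] at hbinet
    apply hinj
    rw [map_intCast, map_zero]
    exact (mul_eq_zero.mp hbinet).resolve_left (sub_ne_zero.mpr hne)
  · intro hε
    rw [hε, Int.cast_neg, Int.cast_one, neg_one_mul] at hfrob
    obtain ⟨hα, hβ⟩ := pow_char_eq_swap_of_sub_pow_char hp hsumfrob hfrob
    have key := mul_pow_div_two_sub_pow_div_two hp hα hβ (intCast_pow_char b) hx0 hαβ hne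
    have hεK := intCast_pow_div_two (K := K) (A - 2 * b)
    rw [hsum] at key
    push_cast at hεK
    apply hinj
    rw [map_intCast, map_intCast]
    refine mul_left_cancel₀ (sub_ne_zero.mpr hne) ?_
    push_cast
    linear_combination (b : K) * hbinet + key + (α - β) * hεK
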